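/- arXiv:1312.1714 — 3 statements merged into one kernel-verified Lean document; each statement's English description precedes it below -/
import Mathlib

section
/- For every ε > 0 there exists a constant C > 0 such that for every integer q > 1 and every positive definite matrix Λ ∈ M_{3,3}(ℤ) whose diagonal entries satisfy Λ_{1,1}, Λ_{2,2}, Λ_{3,3} ≤ 3q², the number of triples (x,y,z) ∈ (ℤ³)³ whose Gram matrix equals Λ is at most C · q^{ε} times the number of pairs (x,y) ∈ (ℤ³)² satisfying ⟨x,x⟩ = Λ_{1,1}, ⟨x,y⟩ = Λ_{1,2}, and ⟨y,y⟩ = Λ_{2,2}. -/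
open Matrix

/-!
A triple `(x, y, z)` with Gram matrix `Λ` restricts to a pair `(x, y)` counted on the right, and
`|x ⨯₃ y|² = Λ₁₁Λ₂₂ - Λ₁₂²` is positive. Hence `x`, `y`, `x ⨯₃ y` form a basis, and `z` is
determined by `⟨z, x⟩ = Λ₁₃`, `⟨z, y⟩ = Λ₂₃` and `⟨z, x ⨯₃ y⟩ = det (x, y, z)`. Since
`det (x, y, z)² = det Λ`, only the sign of the last number is free, so there are at most twice
as many triples as pairs and `C = 2` works for every `ε`.
-/

namespace Matrix.PosDef

variable {R : Type*} [CommRing R] [LinearOrder R] [IsStrictOrderedRing R] [StarRing R]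
  [TrivialStar R]

theorem det_pos_of_fin_two {A : Matrix (Fin 2) (Fin 2) R} (hA : A.PosDef) : 0 < A.det := by
  have hsymm : A 1 0 = A 0 1 := by simpa using congrFun₂ hA.isHermitian 0 1
  have h11 : 0 < A 1 1 := hA.diag_pos
  -- at `(A 1 1, -A 0 1)` the quadratic form is `A 1 1 * det A`
  have hv : ![A 1 1, -A 0 1] ≠ 0 := fun h => h11.ne' (by simpa using congrFun h 0)
  have hform := hA.dotProduct_mulVec_pos hv
  simp only [star_trivial, dotProduct, mulVec, Fin.sum_univ_two, cons_val_zero, cons_val_one,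
    hsymm] at hform
  rw [det_fin_two, hsymm]
  exact pos_of_mul_pos_right (a := A 1 1) (by linear_combination hform) h11.le

theorem mul_sub_mul_pos {n : Type*} {A : Matrix n n R} (hA : A.PosDef) {i j : n} (hij : i ≠ j) :
    0 < A i i * A j j - A i j * A j i := by
  have hinj : Function.Injective ![i, j] := by
    intro a b; fin_cases a <;> fin_cases b <;> simp [hij, hij.symm]
  have hdet := (hA.submatrix hinj).det_pos_of_fin_two
  rw [det_fin_two] at hdet
  simpa using hdet

end Matrix.PosDef

section CrossProduct

variable {R : Type*} [CommRing R]

theorem det_vecCons_cross (x y : Fin 3 → R) : det ![x, y, x ⨯₃ y] = x ⨯₃ y ⬝ᵥ x ⨯₃ y := by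
  rw [← triple_product_eq_det, triple_product_permutation, triple_product_permutation]

theorem det_eq_cross_dotProduct (t : Matrix (Fin 3) (Fin 3) R) : t.det = t 0 ⨯₃ t 1 ⬝ᵥ t 2 := by
  rw [dotProduct_comm, triple_product_permutation, triple_product_eq_det]
  congr 1
  funext i
  fin_cases i <;> rfl

theorem eq_of_dotProduct_eq_of_cross_dotProduct_eq [IsDomain R] {x y z z' : Fin 3 → R}
    (hxy : x ⨯₃ y ⬝ᵥ x ⨯₃ y ≠ 0) (hx : x ⬝ᵥ z = x ⬝ᵥ z') (hy : y ⬝ᵥ z = y ⬝ᵥ z')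
    (hxyz : x ⨯₃ y ⬝ᵥ z = x ⨯₃ y ⬝ᵥ z') : z = z' := by
  refine mulVec_injective_of_det_ne_zero ((det_vecCons_cross x y).symm ▸ hxy) ?_
  funext i
  fin_cases i <;> simp [mulVec, hx, hy, hxyz]

theorem det_sq_eq_of_dotProduct_eq {n : Type*} [Fintype n] [DecidableEq n]
    {t Λ : Matrix n n R} (ht : ∀ i j, t i ⬝ᵥ t j = Λ i j) : t.det ^ 2 = Λ.det := by
  have hΛ : t * tᵀ = Λ := by ext i j; exact ht i j
  rw [← hΛ, det_mul, det_transpose, sq]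

theorem eq_of_dotProduct_eq_of_det_eq [IsDomain R] {t t' Λ : Matrix (Fin 3) (Fin 3) R}
    (hΛ : Λ 0 0 * Λ 1 1 - Λ 0 1 * Λ 1 0 ≠ 0)
    (ht : ∀ i j, t i ⬝ᵥ t j = Λ i j) (ht' : ∀ i j, t' i ⬝ᵥ t' j = Λ i j)
    (h0 : t 0 = t' 0) (h1 : t 1 = t' 1) (hdet : t.det = t'.det) : t = t' := by
  have h2 : t 2 = t' 2 := by
    refine eq_of_dotProduct_eq_of_cross_dotProduct_eq (x := t 0) (y := t 1) ?_ ?_ ?_ ?_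
    · rwa [cross_dot_cross, ht, ht, ht, ht]
    · rw [ht, h0, ht']
    · rw [ht, h1, ht']
    · rw [← det_eq_cross_dotProduct, hdet, det_eq_cross_dotProduct, h0, h1]
  funext i
  fin_cases i
  exacts [h0, h1, h2]

end CrossProduct

theorem finite_setOf_dotProduct_self_eq {ι : Type*} [Fintype ι] (n : ℤ) :
    {v : ι → ℤ | v ⬝ᵥ v = n}.Finite := by
  refine (Set.Finite.pi fun _ => Set.finite_Icc (-n) n).subset fun v hv i _ => ?_
  have hsq : v i ^ 2 ≤ n := by
    rw [← hv, sq]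
    exact Finset.single_le_sum (f := fun j => v j * v j) (fun j _ => mul_self_nonneg (v j))
      (Finset.mem_univ i)
  constructor <;> nlinarith [Int.le_self_sq (v i), Int.le_self_sq (-v i)]

theorem card_gram_triples_le_two_mul_card_pairs (Λ : Matrix (Fin 3) (Fin 3) ℤ)
    (hΛ : Λ 0 0 * Λ 1 1 - Λ 0 1 * Λ 1 0 ≠ 0) :
    Nat.card {t : Fin 3 → (Fin 3 → ℤ) // ∀ i j, t i ⬝ᵥ t j = Λ i j} ≤
      2 * Nat.card {xy : (Fin 3 → ℤ) × (Fin 3 → ℤ) //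
        xy.1 ⬝ᵥ xy.1 = Λ 0 0 ∧ xy.1 ⬝ᵥ xy.2 = Λ 0 1 ∧ xy.2 ⬝ᵥ xy.2 = Λ 1 1} := by
  set P := {xy : (Fin 3 → ℤ) × (Fin 3 → ℤ) //
    xy.1 ⬝ᵥ xy.1 = Λ 0 0 ∧ xy.1 ⬝ᵥ xy.2 = Λ 0 1 ∧ xy.2 ⬝ᵥ xy.2 = Λ 1 1}
  have : Finite P := Set.Finite.to_subtype <|
    ((finite_setOf_dotProduct_self_eq _).prod (finite_setOf_dotProduct_self_eq _)).subset
      fun xy hxy => ⟨hxy.1, hxy.2.2⟩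
  let F : {t : Fin 3 → (Fin 3 → ℤ) // ∀ i j, t i ⬝ᵥ t j = Λ i j} → P × Bool := fun t =>
    (⟨(t.1 0, t.1 1), t.2 0 0, t.2 0 1, t.2 1 1⟩, decide (0 ≤ det t.1))
  have hF : Function.Injective F := by
    rintro ⟨t, ht⟩ ⟨t', ht'⟩ h
    obtain ⟨hxy, hsign⟩ := Prod.mk.inj h
    obtain ⟨h0, h1⟩ := Prod.mk.inj (congrArg Subtype.val hxy)
    have hsign : 0 ≤ det t ↔ 0 ≤ det t' := decide_eq_decide.1 hsign
    have hsq : det t ^ 2 = det t' ^ 2 := by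
      rw [det_sq_eq_of_dotProduct_eq ht, det_sq_eq_of_dotProduct_eq ht']
    have hdet : det t = det t' := by
      rcases sq_eq_sq_iff_eq_or_eq_neg.1 hsq with h | h <;> omega
    exact Subtype.ext (eq_of_dotProduct_eq_of_det_eq hΛ ht ht' h0 h1 hdet)
  simpa [Nat.card_prod, mul_comm] using Nat.card_le_card_of_injective F hF

/-- For every `ε > 0` there is `C > 0` such that for every integer `q > 1` and every
positive definite `Λ ∈ M₃,₃(ℤ)` with diagonal entries at most `3q²`, the number of
triples `(x,y,z) ∈ (ℤ³)³` with Gram matrix `Λ` is at most `C·q^ε` times the number of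
pairs `(x,y) ∈ (ℤ³)²` with `⟨x,x⟩ = Λ₁₁`, `⟨x,y⟩ = Λ₁₂`, `⟨y,y⟩ = Λ₂₂`. -/
theorem triples_le_pairs :
    ∀ ε : ℝ, 0 < ε → ∃ C : ℝ, 0 < C ∧ ∀ q : ℕ, 1 < q →
      ∀ Λ : Matrix (Fin 3) (Fin 3) ℤ, Λ.PosDef →
        (∀ i, Λ i i ≤ 3 * (q : ℤ) ^ 2) →
        (Nat.card {t : Fin 3 → (Fin 3 → ℤ) // ∀ i j, t i ⬝ᵥ t j = Λ i j} : ℝ) ≤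
          C * (q : ℝ) ^ ε *
            (Nat.card {xy : (Fin 3 → ℤ) × (Fin 3 → ℤ) //
              xy.1 ⬝ᵥ xy.1 = Λ 0 0 ∧ xy.1 ⬝ᵥ xy.2 = Λ 0 1 ∧ xy.2 ⬝ᵥ xy.2 = Λ 1 1} : ℝ) := by
  intro ε hε
  refine ⟨2, two_pos, fun q hq Λ hΛ _ => ?_⟩
  have hminor := hΛ.mul_sub_mul_pos (i := 0) (j := 1) (by decide)
  have hqε : 1 ≤ (q : ℝ) ^ ε := Real.one_le_rpow (by exact_mod_cast hq.le) hε.le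
  refine (Nat.cast_le.2 (card_gram_triples_le_two_mul_card_pairs Λ hminor.ne')).trans ?_
  push_cast
  gcongr
  exact le_mul_of_one_le_right two_pos.le hqε
end

section
/- For every ε > 0 there exists a constant c > 0 such that for every integer q > 1, the number of integers r with 1 ≤ r ≤ q² and M_r ≥ q/2 is at least c · q^{2−ε}. -/
/-!
Counting the points of the cube `[-q/2, q/2]³` gives `∑_{1 ≤ r ≤ q²} M_r ≥ q³ - 1`, and the radii
with `M_r < q/2` contribute at most `q³/2` to this sum. The second moment `∑ M_r²` counts pairs
`x, y ∈ [-q, q]³` with `|x| = |y|`; the substitution `(x - y, x + y)` turns them into orthogonal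
pairs in `[-2q, 2q]³`, of which there are `O(q⁴)`: a nonzero `u` of sup norm `N` and content `d`
is orthogonal to `O(Q² d / N + Q)` points of `[-Q, Q]³`, and `∑ d / N` over the cube is `O(Q²)`.
Cauchy–Schwarz over the rich radii then shows that there are `≫ q²` of them.
-/

open Matrix

/-- `M r`: the number of lattice points on the sphere of radius `√r` centered at the
origin, i.e. `#{x ∈ ℤ³ : x₁² + x₂² + x₃² = r}`. -/
noncomputable def latticePointsOnSphere (r : ℕ) : ℕ :=
  Nat.card {x : Fin 3 → ℤ // x ⬝ᵥ x = (r : ℤ)}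

open Finset

namespace LatticePoints

lemma sq_sum_sub_le_card_filter_mul_sum_sq {α : Type*} (s : Finset α) (f : α → ℝ) {θ : ℝ}
    (hθ : 0 ≤ θ) (h : 0 ≤ ∑ i ∈ s, f i - θ * #s) :
    (∑ i ∈ s, f i - θ * #s) ^ 2 ≤ #{i ∈ s | θ ≤ f i} * ∑ i ∈ s, f i ^ 2 := by
  have hpoor : ∑ i ∈ s with ¬θ ≤ f i, f i ≤ θ * #s :=
    calc ∑ i ∈ s with ¬θ ≤ f i, f i ≤ ∑ i ∈ s with ¬θ ≤ f i, θ :=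
          sum_le_sum fun i hi => (not_le.mp (mem_filter.mp hi).2).le
      _ ≤ θ * #s := by
          rw [sum_const, nsmul_eq_mul, mul_comm]
          gcongr
          exact filter_subset _ s
  have hrich : ∑ i ∈ s, f i - θ * #s ≤ ∑ i ∈ s with θ ≤ f i, f i := by
    rw [← sum_filter_add_sum_filter_not s (fun i => θ ≤ f i)]
    linarith
  calc (∑ i ∈ s, f i - θ * #s) ^ 2 ≤ (∑ i ∈ s with θ ≤ f i, f i) ^ 2 := by gcongr
    _ ≤ #{i ∈ s | θ ≤ f i} * ∑ i ∈ s with θ ≤ f i, f i ^ 2 := sq_sum_le_card_mul_sum_sq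
    _ ≤ #{i ∈ s | θ ≤ f i} * ∑ i ∈ s, f i ^ 2 := by
        gcongr
        exact filter_subset _ _

lemma div_gcd_dvd_of_dvd_mul {m x y : ℤ} (hm : m ≠ 0) (h : m ∣ x * y) :
    m / (x.gcd m : ℤ) ∣ y := by
  have hg : 0 < m.gcd x := Int.gcd_pos_of_ne_zero_left x hm
  rw [Int.gcd_comm]
  refine Int.dvd_of_dvd_mul_right_of_gcd_one ?_ (Int.gcd_div_gcd_div_gcd hg)
  have hg' : (m.gcd x : ℤ) ≠ 0 := by exact_mod_cast hg.ne'
  obtain ⟨m', hm'⟩ := Int.gcd_dvd_left m x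
  obtain ⟨x', hx'⟩ := Int.gcd_dvd_right m x
  generalize (m.gcd x : ℤ) = g at hg' hm' hx'
  subst hm' hx'
  rw [Int.mul_ediv_cancel_left _ hg', Int.mul_ediv_cancel_left _ hg']
  rw [mul_assoc] at h
  exact (mul_dvd_mul_iff_left hg').mp h

lemma card_le_of_pairwise_dvd_sub {S : Finset ℤ} {a : ℤ} {L n : ℕ}
    (hS : S ⊆ Icc a (a + L)) (hd : ∀ w ∈ S, ∀ w' ∈ S, (n : ℤ) ∣ w - w') :
    #S ≤ L / n + 1 := by
  rw [← card_range (L / n + 1)]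
  refine card_le_card_of_injOn (fun w => (w - a).toNat / n) (fun w hw => ?_) ?_
  · have := mem_Icc.mp (hS hw)
    simp only [coe_range, Set.mem_Iio]
    exact Nat.lt_succ_of_le (Nat.div_le_div_right (by omega))
  · intro w hw w' hw' heq
    have h1 := mem_Icc.mp (hS hw)
    have h2 := mem_Icc.mp (hS hw')
    have hmod : (w - a).toNat % n = (w' - a).toNat % n := by
      refine (Nat.modEq_iff_dvd.mpr ?_).symm
      have := hd w hw w' hw'
      rwa [Int.toNat_of_nonneg (by omega), Int.toNat_of_nonneg (by omega), sub_sub_sub_cancel_right]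
    have hw_eq := Nat.div_add_mod ((w - a).toNat) n
    simp only at heq
    rw [heq, hmod, Nat.div_add_mod] at hw_eq
    omega

lemma card_le_of_pairwise_dvd_sub_prod {P : Finset (ℤ × ℤ)} {a b : ℤ} {L n₁ n₂ : ℕ}
    (hP : P ⊆ Icc a (a + L) ×ˢ Icc b (b + L))
    (h₁ : ∀ p ∈ P, ∀ p' ∈ P, (n₁ : ℤ) ∣ p.1 - p'.1)
    (h₂ : ∀ p ∈ P, ∀ p' ∈ P, p.1 = p'.1 → (n₂ : ℤ) ∣ p.2 - p'.2) :
    #P ≤ (L / n₂ + 1) * (L / n₁ + 1) := by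
  have hfst : #(P.image Prod.fst) ≤ L / n₁ + 1 := by
    refine card_le_of_pairwise_dvd_sub (a := a) (fun s hs => ?_) fun s hs s' hs' => ?_
    · obtain ⟨p, hp, rfl⟩ := mem_image.mp hs
      exact (mem_product.mp (hP hp)).1
    · obtain ⟨p, hp, rfl⟩ := mem_image.mp hs
      obtain ⟨p', hp', rfl⟩ := mem_image.mp hs'
      exact h₁ p hp p' hp'
  have hsnd : ∀ s ∈ P.image Prod.fst, #{p ∈ P | p.1 = s} ≤ L / n₂ + 1 := by
    intro s _
    rw [← card_image_of_injOn (f := Prod.snd) fun p hp p' hp' e =>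
      Prod.ext (((mem_filter.mp hp).2).trans ((mem_filter.mp hp').2).symm) e]
    refine card_le_of_pairwise_dvd_sub (a := b) (fun t ht => ?_) fun t ht t' ht' => ?_
    · obtain ⟨p, hp, rfl⟩ := mem_image.mp ht
      exact (mem_product.mp (hP (mem_filter.mp hp).1)).2
    · obtain ⟨p, hp, rfl⟩ := mem_image.mp ht
      obtain ⟨p', hp', rfl⟩ := mem_image.mp ht'
      obtain ⟨hpP, rfl⟩ := mem_filter.mp hp
      obtain ⟨hpP', hpp'⟩ := mem_filter.mp hp'
      exact h₂ p hpP p' hpP' hpp'.symm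
  exact (card_le_mul_card_image_of_maps_to (fun p hp => mem_image_of_mem Prod.fst hp) _ hsnd).trans
    (Nat.mul_le_mul_left _ hfst)

lemma cast_div_add_one_mul_le (L x y : ℕ) :
    (((L / x : ℕ) + 1) * ((L / y : ℕ) + 1) : ℝ) ≤ (L : ℝ) ^ 2 / (x * y) + 2 * L + 1 := by
  have h₁ : ((L / x : ℕ) : ℝ) ≤ L / x := Nat.cast_div_le
  have h₂ : ((L / y : ℕ) : ℝ) ≤ L / y := Nat.cast_div_le
  have h₁' : ((L / x : ℕ) : ℝ) ≤ L := by exact_mod_cast Nat.div_le_self _ _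
  have h₂' : ((L / y : ℕ) : ℝ) ≤ L := by exact_mod_cast Nat.div_le_self _ _
  have hxy : (L : ℝ) / x * (L / y) = L ^ 2 / (x * y) := by ring
  nlinarith [mul_le_mul h₁ h₂ (by positivity) (by positivity)]

lemma card_Icc_dvd_linear_le (Q : ℕ) {m : ℕ} (hm : 0 < m) (a b : ℤ) :
    (#{p ∈ Icc (-Q : ℤ) Q ×ˢ Icc (-Q : ℤ) Q | (m : ℤ) ∣ a * p.1 + b * p.2} : ℝ)
      ≤ 4 * Q ^ 2 * a.gcd (b.gcd m) / m + 4 * Q + 1 := by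
  set g := b.gcd m
  set h := a.gcd g
  have hm0 : (m : ℤ) ≠ 0 := by exact_mod_cast hm.ne'
  have hgm : (g : ℤ) ∣ m := Int.gcd_dvd_right b m
  have hm' : g * (m / g) = m := Nat.mul_div_cancel' (Int.natCast_dvd_natCast.mp hgm)
  have hg' : h * (g / h) = g :=
    Nat.mul_div_cancel' (Int.natCast_dvd_natCast.mp (Int.gcd_dvd_right a g))
  have hQ : Icc (-Q : ℤ) Q = Icc (-Q : ℤ) (-Q + (2 * Q : ℕ)) := by push_cast; ring_nf
  set P := {p ∈ Icc (-Q : ℤ) Q ×ˢ Icc (-Q : ℤ) Q | (m : ℤ) ∣ a * p.1 + b * p.2}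
  have h₁ : ∀ p ∈ P, ∀ p' ∈ P, ((g / h : ℕ) : ℤ) ∣ p.1 - p'.1 := by
    have key : ∀ p ∈ P, ((g / h : ℕ) : ℤ) ∣ p.1 := fun p hp => by
      have hga : (g : ℤ) ∣ a * p.1 := by
        simpa using dvd_sub (hgm.trans (mem_filter.mp hp).2) ((Int.gcd_dvd_left b m).mul_right p.2)
      exact_mod_cast div_gcd_dvd_of_dvd_mul (by positivity) hga
    exact fun p hp p' hp' => dvd_sub (key p hp) (key p' hp')
  have h₂ : ∀ p ∈ P, ∀ p' ∈ P, p.1 = p'.1 → ((m / g : ℕ) : ℤ) ∣ p.2 - p'.2 := by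
    intro p hp p' hp' hpp'
    have hb : (m : ℤ) ∣ b * (p.2 - p'.2) := by
      have := dvd_sub (mem_filter.mp hp).2 (mem_filter.mp hp').2
      rwa [hpp', show a * p'.1 + b * p.2 - (a * p'.1 + b * p'.2) = b * (p.2 - p'.2) by ring] at this
    exact_mod_cast div_gcd_dvd_of_dvd_mul hm0 hb
  have hcard := card_le_of_pairwise_dvd_sub_prod (by rw [← hQ]; exact filter_subset _ _) h₁ h₂
  have hh0 : 0 < h := Int.gcd_pos_of_ne_zero_right a (by positivity)
  generalize m / g = m₁ at hm' hcard
  generalize g / h = g₁ at hg' hcard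
  have hcoeff : ((2 * Q : ℕ) : ℝ) ^ 2 / (m₁ * g₁) = 4 * Q ^ 2 * h / m := by
    rw [← hm', ← hg']
    push_cast
    field_simp
    ring
  calc (#P : ℝ) ≤ ((2 * Q / m₁ : ℕ) + 1) * ((2 * Q / g₁ : ℕ) + 1) := by exact_mod_cast hcard
    _ ≤ ((2 * Q : ℕ) : ℝ) ^ 2 / (m₁ * g₁) + 2 * (2 * Q : ℕ) + 1 := cast_div_add_one_mul_le _ _ _
    _ = 4 * Q ^ 2 * h / m + 4 * Q + 1 := by rw [hcoeff]; push_cast; ring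

section Cube

variable {ι : Type*} [Fintype ι]

def supNorm (v : ι → ℤ) : ℕ := univ.sup fun i => (v i).natAbs

lemma natAbs_le_supNorm (v : ι → ℤ) (i : ι) : (v i).natAbs ≤ supNorm v :=
  le_sup (f := fun i => (v i).natAbs) (mem_univ i)

lemma supNorm_pos {v : ι → ℤ} (hv : v ≠ 0) : 0 < supNorm v := by
  obtain ⟨i, hi⟩ := Function.ne_iff.mp hv
  exact (Int.natAbs_pos.mpr hi).trans_le (natAbs_le_supNorm v i)

lemma exists_natAbs_eq_supNorm [Nonempty ι] (v : ι → ℤ) : ∃ i, (v i).natAbs = supNorm v := by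
  obtain ⟨i, -, hi⟩ := exists_mem_eq_sup univ univ_nonempty fun i => (v i).natAbs
  exact ⟨i, hi.symm⟩

lemma supNorm_smul (d : ℕ) (v : ι → ℤ) : supNorm ((d : ℤ) • v) = d * supNorm v := by
  simp only [supNorm, Pi.smul_apply, smul_eq_mul, Int.natAbs_mul, Int.natAbs_natCast,
    Finset.mul_sup₀]

def content (v : ι → ℤ) : ℕ := univ.gcd fun i => (v i).natAbs

lemma content_dvd (v : ι → ℤ) (i : ι) : (content v : ℤ) ∣ v i :=
  Int.natCast_dvd.mpr (gcd_dvd (f := fun i => (v i).natAbs) (mem_univ i))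

lemma dvd_content {v : ι → ℤ} {d : ℕ} (h : ∀ i, (d : ℤ) ∣ v i) : d ∣ content v :=
  Finset.dvd_gcd fun i _ => Int.natCast_dvd.mp (h i)

lemma content_pos {v : ι → ℤ} (hv : v ≠ 0) : 0 < content v := by
  obtain ⟨i, hi⟩ := Function.ne_iff.mp hv
  refine Nat.pos_of_ne_zero fun h => hi ?_
  simpa using (gcd_eq_zero_iff.mp h) i (mem_univ i)

lemma content_le_supNorm {v : ι → ℤ} (hv : v ≠ 0) : content v ≤ supNorm v := by
  obtain ⟨i₀, -⟩ := Function.ne_iff.mp hv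
  have : Nonempty ι := ⟨i₀⟩
  obtain ⟨i, hi⟩ := exists_natAbs_eq_supNorm v
  rw [← hi]
  exact Nat.le_of_dvd (hi ▸ supNorm_pos hv) (Int.natCast_dvd.mp (content_dvd v i))

lemma one_le_dotProduct_self {x : ι → ℤ} (hx : x ≠ 0) : 1 ≤ x ⬝ᵥ x := by
  have h0 : 0 ≤ x ⬝ᵥ x := sum_nonneg fun i _ => mul_self_nonneg (x i)
  have h1 : x ⬝ᵥ x ≠ 0 := dotProduct_self_eq_zero.not.mpr hx
  omega

variable [DecidableEq ι]

variable (ι) in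
noncomputable def cube (Q : ℕ) : Finset (ι → ℤ) := Fintype.piFinset fun _ => Icc (-(Q : ℤ)) Q

lemma mem_cube {Q : ℕ} {v : ι → ℤ} : v ∈ cube ι Q ↔ ∀ i, (v i).natAbs ≤ Q := by
  simp only [cube, Fintype.mem_piFinset, mem_Icc]
  exact forall_congr' fun i => by omega

lemma mem_cube_iff_supNorm_le {Q : ℕ} {v : ι → ℤ} : v ∈ cube ι Q ↔ supNorm v ≤ Q := by
  simp [mem_cube, supNorm]

lemma card_cube (Q : ℕ) : #(cube ι Q) = (2 * Q + 1) ^ Fintype.card ι := by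
  simp only [cube, Fintype.card_piFinset, Int.card_Icc, prod_const, card_univ]
  congr 1
  omega

lemma cube_mono {Q Q' : ℕ} (h : Q ≤ Q') : cube ι Q ⊆ cube ι Q' := fun _ hv =>
  mem_cube.mpr fun i => (mem_cube.mp hv i).trans h

lemma zero_mem_cube (Q : ℕ) : (0 : ι → ℤ) ∈ cube ι Q := mem_cube.mpr fun _ => by simp

lemma sum_content_eq_div_supNorm_le (Q d : ℕ) :
    ∑ u ∈ (cube ι Q).erase 0 with content u = d, (content u : ℝ) / supNorm u ≤
      ∑ w ∈ (cube ι (Q / d)).erase 0, (1 : ℝ) / supNorm w := by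
  rcases Nat.eq_zero_or_pos d with rfl | hd
  · exact (sum_eq_zero fun u hu => by simp [(mem_filter.mp hu).2]).trans_le
      (sum_nonneg fun _ _ => by positivity)
  have hsub : {u ∈ (cube ι Q).erase 0 | content u = d} ⊆
      ((cube ι (Q / d)).erase 0).image ((d : ℤ) • ·) := by
    intro u hu
    obtain ⟨hu', rfl⟩ := mem_filter.mp hu
    obtain ⟨hu0, hcube⟩ := mem_erase.mp hu'
    have hdiv : (content u : ℤ) • (fun t => u t / content u) = u :=
      funext fun t => Int.mul_ediv_cancel' (content_dvd u t)
    refine mem_image.mpr ⟨fun t => u t / content u, mem_erase.mpr ⟨?_, ?_⟩, hdiv⟩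
    · intro h
      exact hu0 (by rw [← hdiv, h, smul_zero])
    · rw [mem_cube_iff_supNorm_le, Nat.le_div_iff_mul_le hd, mul_comm, ← supNorm_smul, hdiv]
      exact mem_cube_iff_supNorm_le.mp hcube
  have hinj : Set.InjOn ((d : ℤ) • · : (ι → ℤ) → ι → ℤ) ((cube ι (Q / d)).erase 0) :=
    (smul_right_injective _ (by exact_mod_cast hd.ne')).injOn
  calc ∑ u ∈ (cube ι Q).erase 0 with content u = d, (content u : ℝ) / supNorm u
      = ∑ u ∈ (cube ι Q).erase 0 with content u = d, (d : ℝ) / supNorm u :=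
        sum_congr rfl fun u hu => by rw [(mem_filter.mp hu).2]
    _ ≤ ∑ u ∈ ((cube ι (Q / d)).erase 0).image ((d : ℤ) • ·), (d : ℝ) / supNorm u :=
        sum_le_sum_of_subset_of_nonneg hsub fun _ _ _ => by positivity
    _ = ∑ w ∈ (cube ι (Q / d)).erase 0, (1 : ℝ) / supNorm w := by
        rw [sum_image hinj]
        refine sum_congr rfl fun w _ => ?_
        rw [supNorm_smul, Nat.cast_mul, div_mul_eq_div_div, div_self (by positivity)]

lemma mem_cube_of_dotProduct_self_le {Q : ℕ} {x : ι → ℤ} (h : x ⬝ᵥ x ≤ Q ^ 2) : x ∈ cube ι Q := by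
  refine mem_cube.mpr fun i => ?_
  have hi : x i * x i ≤ x ⬝ᵥ x :=
    single_le_sum (f := fun j => x j * x j) (fun j _ => mul_self_nonneg (x j)) (mem_univ i)
  simpa using (Int.natAbs_le_iff_mul_self_le (b := (Q : ℤ))).mpr (by linarith [sq (Q : ℤ)])

lemma dotProduct_self_le_of_mem_cube {Q : ℕ} {x : ι → ℤ} (hx : x ∈ cube ι Q) :
    x ⬝ᵥ x ≤ Fintype.card ι * Q ^ 2 := by
  calc x ⬝ᵥ x = ∑ i, x i * x i := rfl
    _ ≤ ∑ _i : ι, (Q : ℤ) * Q := sum_le_sum fun i _ =>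
        Int.natAbs_le_iff_mul_self_le.mp (by simpa using mem_cube.mp hx i)
    _ = Fintype.card ι * Q ^ 2 := by rw [sum_const, card_univ, nsmul_eq_mul]; ring

lemma card_dotProduct_self_eq_le (Q : ℕ) :
    #{p ∈ cube ι Q ×ˢ cube ι Q | p.1 ⬝ᵥ p.1 = p.2 ⬝ᵥ p.2} ≤
      #{p ∈ cube ι (2 * Q) ×ˢ cube ι (2 * Q) | p.1 ⬝ᵥ p.2 = 0} := by
  refine card_le_card_of_injOn (fun p => (p.1 - p.2, p.1 + p.2)) (fun p hp => ?_)
    (fun p _ p' _ e => ?_)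
  · simp only [coe_filter, mem_product, mem_cube, Set.mem_ofPred_eq] at hp ⊢
    obtain ⟨⟨hx, hy⟩, hxy⟩ := hp
    refine ⟨⟨fun i => ?_, fun i => ?_⟩, ?_⟩
    · have := hx i; have := hy i; simp only [Pi.sub_apply]; omega
    · have := hx i; have := hy i; simp only [Pi.add_apply]; omega
    · rw [sub_dotProduct, dotProduct_add, dotProduct_add, dotProduct_comm p.2 p.1, hxy]
      ring
  · obtain ⟨hsub, hadd⟩ := Prod.ext_iff.mp e
    have h₁ := congrFun hsub
    have h₂ := congrFun hadd
    simp only [Pi.sub_apply, Pi.add_apply] at h₁ h₂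
    exact Prod.ext (funext fun i => by linarith [h₁ i, h₂ i])
      (funext fun i => by linarith [h₁ i, h₂ i])

end Cube

lemma eq_or_eq_succAbove_zero_or_eq_succAbove_one (i t : Fin 3) :
    t = i ∨ t = i.succAbove 0 ∨ t = i.succAbove 1 := by
  rcases Fin.eq_self_or_eq_succAbove i t with rfl | ⟨s, rfl⟩
  · exact Or.inl rfl
  · fin_cases s <;> simp

lemma card_orthogonal_le_card_dvd (Q : ℕ) {u : Fin 3 → ℤ} {i : Fin 3} (hui : u i ≠ 0) :
    #{v ∈ cube (Fin 3) Q | u ⬝ᵥ v = 0} ≤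
      #{p ∈ Icc (-Q : ℤ) Q ×ˢ Icc (-Q : ℤ) Q |
        ((u i).natAbs : ℤ) ∣ u (i.succAbove 0) * p.1 + u (i.succAbove 1) * p.2} := by
  set j := i.succAbove 0
  set k := i.succAbove 1
  have hdot : ∀ v : Fin 3 → ℤ, u ⬝ᵥ v = u i * v i + (u j * v j + u k * v k) := fun v => by
    simp [dotProduct, Fin.sum_univ_succAbove _ i, j, k]
  refine card_le_card_of_injOn (fun v => (v j, v k)) (fun v hv => ?_) (fun v hv v' hv' e => ?_)
  · obtain ⟨hcube, horth⟩ := mem_filter.mp hv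
    have hb := mem_cube.mp hcube
    simp only [coe_filter, Set.mem_ofPred_eq, mem_product, mem_Icc]
    refine ⟨⟨by have := hb j; omega, by have := hb k; omega⟩, ?_⟩
    rw [show u j * v j + u k * v k = -(u i * v i) by linarith [hdot v]]
    exact (Int.natAbs_dvd.mpr (dvd_mul_right _ _)).neg_right
  · obtain ⟨hj, hk⟩ : v j = v' j ∧ v k = v' k := Prod.ext_iff.mp e
    have hi : v i = v' i := mul_left_cancel₀ hui <| by
      have h := hdot v
      rw [hj, hk] at h
      linarith [hdot v', (mem_filter.mp hv).2, (mem_filter.mp hv').2]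
    funext t
    rcases eq_or_eq_succAbove_zero_or_eq_succAbove_one i t with rfl | rfl | rfl <;> assumption

lemma card_orthogonal_le (Q : ℕ) {u : Fin 3 → ℤ} (hu : u ≠ 0) :
    (#{v ∈ cube (Fin 3) Q | u ⬝ᵥ v = 0} : ℝ) ≤ 4 * Q ^ 2 * content u / supNorm u + 4 * Q + 1 := by
  obtain ⟨i, hi⟩ := exists_natAbs_eq_supNorm u
  have hui : 0 < (u i).natAbs := hi ▸ supNorm_pos hu
  set a := u (i.succAbove 0)
  set b := u (i.succAbove 1)
  have hgcd : a.gcd (b.gcd (u i).natAbs) ≤ content u := by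
    refine Nat.le_of_dvd (content_pos hu) (dvd_content fun t => ?_)
    have h₁ := Int.gcd_dvd_left a (b.gcd (u i).natAbs)
    have h₂ := Int.gcd_dvd_right a (b.gcd (u i).natAbs)
    rcases eq_or_eq_succAbove_zero_or_eq_succAbove_one i t with rfl | rfl | rfl
    · exact h₂.trans ((Int.gcd_dvd_right _ _).trans (Int.natAbs_dvd.mpr dvd_rfl))
    · exact h₁
    · exact h₂.trans (Int.gcd_dvd_left _ _)
  calc (#{v ∈ cube (Fin 3) Q | u ⬝ᵥ v = 0} : ℝ)
      ≤ #{p ∈ Icc (-Q : ℤ) Q ×ˢ Icc (-Q : ℤ) Q | ((u i).natAbs : ℤ) ∣ a * p.1 + b * p.2} := by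
        exact_mod_cast card_orthogonal_le_card_dvd Q (Int.natAbs_pos.mp hui)
    _ ≤ 4 * Q ^ 2 * a.gcd (b.gcd (u i).natAbs) / (u i).natAbs + 4 * Q + 1 :=
        card_Icc_dvd_linear_le Q hui a b
    _ ≤ 4 * Q ^ 2 * content u / supNorm u + 4 * Q + 1 := by rw [← hi]; gcongr

lemma card_supNorm_eq_le {n : ℕ} (hn : 1 ≤ n) :
    #{w ∈ cube (Fin 3) n | supNorm w = n} ≤ 26 * n ^ 2 := by
  have hsub : {w ∈ cube (Fin 3) n | supNorm w = n} ⊆ cube (Fin 3) n \ cube (Fin 3) (n - 1) :=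
    fun w hw => by
      simp only [mem_filter, mem_sdiff, mem_cube_iff_supNorm_le] at hw ⊢
      omega
  refine (card_le_card hsub).trans ?_
  rw [card_sdiff_of_subset (cube_mono (Nat.sub_le n 1)), card_cube, card_cube, Fintype.card_fin]
  obtain ⟨p, rfl⟩ : ∃ p, n = p + 1 := ⟨n - 1, by omega⟩
  rw [Nat.add_sub_cancel, tsub_le_iff_right]
  nlinarith

lemma sum_inv_supNorm_le (X : ℕ) :
    ∑ w ∈ (cube (Fin 3) X).erase 0, (1 : ℝ) / supNorm w ≤ 26 * X ^ 2 := by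
  have hmaps : ∀ w ∈ (cube (Fin 3) X).erase 0, supNorm w ∈ Icc 1 X := fun w hw => by
    obtain ⟨hw0, hw⟩ := mem_erase.mp hw
    exact mem_Icc.mpr ⟨supNorm_pos hw0, mem_cube_iff_supNorm_le.mp hw⟩
  rw [← sum_fiberwise_of_maps_to hmaps]
  calc ∑ n ∈ Icc 1 X, ∑ w ∈ (cube (Fin 3) X).erase 0 with supNorm w = n, (1 : ℝ) / supNorm w
      ≤ ∑ n ∈ Icc 1 X, (26 * X : ℝ) := by
        refine sum_le_sum fun n hn => ?_
        obtain ⟨hn1, hnX⟩ := mem_Icc.mp hn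
        have hfiber : {w ∈ (cube (Fin 3) X).erase 0 | supNorm w = n} ⊆
            {w ∈ cube (Fin 3) n | supNorm w = n} := fun w hw => by
          obtain ⟨-, hw⟩ := mem_filter.mp hw
          exact mem_filter.mpr ⟨mem_cube_iff_supNorm_le.mpr hw.le, hw⟩
        have hcard : (#{w ∈ (cube (Fin 3) X).erase 0 | supNorm w = n} : ℝ) ≤ 26 * n ^ 2 := by
          exact_mod_cast (card_le_card hfiber).trans (card_supNorm_eq_le hn1)
        have hn0 : (0 : ℝ) < n := by exact_mod_cast hn1
        rw [sum_congr rfl fun w hw => by rw [(mem_filter.mp hw).2], sum_const, nsmul_eq_mul,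
          ← div_eq_mul_one_div, div_le_iff₀ hn0]
        have : (n : ℝ) ≤ X := by exact_mod_cast hnX
        nlinarith
    _ = 26 * X ^ 2 := by rw [sum_const, Nat.card_Icc, nsmul_eq_mul]; push_cast; ring

lemma sum_content_div_supNorm_le (Q : ℕ) :
    ∑ u ∈ (cube (Fin 3) Q).erase 0, (content u : ℝ) / supNorm u ≤ 52 * Q ^ 2 := by
  have hmaps : ∀ u ∈ (cube (Fin 3) Q).erase 0, content u ∈ Icc 1 Q := fun u hu => by
    obtain ⟨hu0, hu⟩ := mem_erase.mp hu
    exact mem_Icc.mpr ⟨content_pos hu0,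
      (content_le_supNorm hu0).trans (mem_cube_iff_supNorm_le.mp hu)⟩
  have hIcc : Icc 1 Q = Ioo 0 (Q + 1) := by ext; simp; omega
  rw [← sum_fiberwise_of_maps_to hmaps]
  calc ∑ d ∈ Icc 1 Q, ∑ u ∈ (cube (Fin 3) Q).erase 0 with content u = d,
        (content u : ℝ) / supNorm u
      ≤ ∑ d ∈ Icc 1 Q, 26 * (Q : ℝ) ^ 2 * ((d : ℝ) ^ 2)⁻¹ := by
        refine sum_le_sum fun d hd => (sum_content_eq_div_supNorm_le Q d).trans ?_
        refine (sum_inv_supNorm_le (Q / d)).trans ?_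
        have hd0 : (0 : ℝ) < d := by exact_mod_cast (mem_Icc.mp hd).1
        have : ((Q / d : ℕ) : ℝ) ≤ Q / d := Nat.cast_div_le
        calc 26 * ((Q / d : ℕ) : ℝ) ^ 2 ≤ 26 * ((Q : ℝ) / d) ^ 2 := by gcongr
          _ = 26 * (Q : ℝ) ^ 2 * ((d : ℝ) ^ 2)⁻¹ := by ring
    _ ≤ 26 * (Q : ℝ) ^ 2 * 2 := by
        rw [← mul_sum, hIcc]
        gcongr
        simpa using sum_Ioo_inv_sq_le (α := ℝ) 0 (Q + 1)
    _ = 52 * Q ^ 2 := by ring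

lemma card_cube_fin_three_le {Q : ℕ} (hQ : 1 ≤ Q) : (#(cube (Fin 3) Q) : ℝ) ≤ 27 * Q ^ 3 := by
  rw [card_cube, Fintype.card_fin]
  have : (2 * Q + 1 : ℝ) ≤ 3 * Q := by
    have : (1 : ℝ) ≤ Q := by exact_mod_cast hQ
    linarith
  calc ((2 * Q + 1) ^ 3 : ℕ) = (2 * Q + 1 : ℝ) ^ 3 := by push_cast; ring
    _ ≤ (3 * Q) ^ 3 := by gcongr
    _ = 27 * Q ^ 3 := by ring

lemma card_orthogonal_pairs_le {Q : ℕ} (hQ : 1 ≤ Q) :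
    (#{p ∈ cube (Fin 3) Q ×ˢ cube (Fin 3) Q | p.1 ⬝ᵥ p.2 = 0} : ℝ) ≤ 370 * Q ^ 4 := by
  have hC := card_cube_fin_three_le hQ
  have hzero : (#{v ∈ cube (Fin 3) Q | (0 : Fin 3 → ℤ) ⬝ᵥ v = 0} : ℝ) ≤ 27 * Q ^ 3 :=
    le_trans (by exact_mod_cast card_filter_le _ _) hC
  have hrest : ∑ u ∈ (cube (Fin 3) Q).erase 0, (#{v ∈ cube (Fin 3) Q | u ⬝ᵥ v = 0} : ℝ) ≤
      4 * Q ^ 2 * (52 * Q ^ 2) + 27 * Q ^ 3 * (4 * Q + 1) := by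
    calc ∑ u ∈ (cube (Fin 3) Q).erase 0, (#{v ∈ cube (Fin 3) Q | u ⬝ᵥ v = 0} : ℝ)
        ≤ ∑ u ∈ (cube (Fin 3) Q).erase 0,
            (4 * (Q : ℝ) ^ 2 * ((content u : ℝ) / supNorm u) + (4 * Q + 1)) :=
          sum_le_sum fun u hu => (card_orthogonal_le Q (ne_of_mem_erase hu)).trans_eq (by ring)
      _ = 4 * Q ^ 2 * ∑ u ∈ (cube (Fin 3) Q).erase 0, (content u : ℝ) / supNorm u
            + #((cube (Fin 3) Q).erase 0) * (4 * Q + 1) := by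
          rw [sum_add_distrib, mul_sum, sum_const, nsmul_eq_mul]
      _ ≤ 4 * Q ^ 2 * (52 * Q ^ 2) + 27 * Q ^ 3 * (4 * Q + 1) := by
          gcongr
          · exact sum_content_div_supNorm_le Q
          · exact le_trans (by exact_mod_cast card_erase_le) hC
  have hsplit : #{p ∈ cube (Fin 3) Q ×ˢ cube (Fin 3) Q | p.1 ⬝ᵥ p.2 = 0} =
      ∑ u ∈ cube (Fin 3) Q, #{v ∈ cube (Fin 3) Q | u ⬝ᵥ v = 0} := by
    simp only [card_filter, sum_product]
  rw [hsplit, Nat.cast_sum, ← add_sum_erase _ _ (zero_mem_cube Q)]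
  have : (Q : ℝ) ^ 3 ≤ Q ^ 4 := pow_le_pow_right₀ (by exact_mod_cast hQ) (by norm_num)
  linarith

lemma latticePointsOnSphere_eq_card {r Q : ℕ} (hr : r ≤ Q ^ 2) :
    latticePointsOnSphere r = #{x ∈ cube (Fin 3) Q | x ⬝ᵥ x = (r : ℤ)} := by
  have hset : {x : Fin 3 → ℤ | x ⬝ᵥ x = r} = ↑{x ∈ cube (Fin 3) Q | x ⬝ᵥ x = (r : ℤ)} := by
    ext x
    simp only [coe_filter, Set.mem_ofPred_eq, iff_and_self]
    exact fun h => mem_cube_of_dotProduct_self_le (by rw [h]; exact_mod_cast hr)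
  rw [latticePointsOnSphere, ← Set.ncard_coe_finset, ← hset]
  exact Nat.card_coe_set_eq _

lemma cube_sub_one_le_sum_latticePointsOnSphere (q : ℕ) :
    (q : ℝ) ^ 3 - 1 ≤ ∑ r ∈ Icc 1 (q ^ 2), (latticePointsOnSphere r : ℝ) := by
  have hfiber : ∀ r ∈ Icc 1 (q ^ 2), latticePointsOnSphere r =
      #{x ∈ cube (Fin 3) q | (x ⬝ᵥ x).toNat = r} := fun r hr => by
    rw [latticePointsOnSphere_eq_card (mem_Icc.mp hr).2]
    exact congrArg card (filter_congr fun x _ => by have := (mem_Icc.mp hr).1; omega)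
  have hsub : (cube (Fin 3) (q / 2)).erase 0 ⊆
      {x ∈ cube (Fin 3) q | (x ⬝ᵥ x).toNat ∈ Icc 1 (q ^ 2)} := fun x hx => by
    obtain ⟨hx0, hx⟩ := mem_erase.mp hx
    have h1 := one_le_dotProduct_self hx0
    have h2 := dotProduct_self_le_of_mem_cube hx
    have h3 : (2 * (q / 2 : ℕ) : ℤ) ≤ q := by exact_mod_cast Nat.mul_div_le q 2
    simp only [Fintype.card_fin, Nat.cast_ofNat] at h2
    refine mem_filter.mpr ⟨cube_mono (Nat.div_le_self q 2) hx, mem_Icc.mpr ⟨by omega, ?_⟩⟩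
    have : x ⬝ᵥ x ≤ ((q ^ 2 : ℕ) : ℤ) := by push_cast; nlinarith
    omega
  have hcard : q ^ 3 ≤ #((cube (Fin 3) (q / 2)).erase 0) + 1 := by
    rw [card_erase_add_one (zero_mem_cube _), card_cube, Fintype.card_fin]
    exact Nat.pow_le_pow_left (by omega) 3
  have hnat : q ^ 3 ≤ ∑ r ∈ Icc 1 (q ^ 2), latticePointsOnSphere r + 1 := by
    rw [sum_congr rfl hfiber, sum_card_fiberwise_eq_card_filter]
    exact hcard.trans (Nat.add_le_add_right (card_le_card hsub) 1)
  have : ((q ^ 3 : ℕ) : ℝ) ≤ ((∑ r ∈ Icc 1 (q ^ 2), latticePointsOnSphere r + 1 : ℕ) : ℝ) := by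
    exact_mod_cast hnat
  push_cast at this
  linarith

lemma sum_sq_latticePointsOnSphere_le {q : ℕ} (hq : 1 ≤ q) :
    ∑ r ∈ Icc 1 (q ^ 2), (latticePointsOnSphere r : ℝ) ^ 2 ≤ 5920 * q ^ 4 := by
  set P := {p ∈ cube (Fin 3) q ×ˢ cube (Fin 3) q | p.1 ⬝ᵥ p.1 = p.2 ⬝ᵥ p.2}
  have hfiber : ∀ r ∈ Icc 1 (q ^ 2), latticePointsOnSphere r ^ 2 =
      #{p ∈ P | (p.1 ⬝ᵥ p.1).toNat = r} := fun r hr => by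
    obtain ⟨hr1, hrq⟩ := mem_Icc.mp hr
    rw [latticePointsOnSphere_eq_card hrq, sq, ← card_product]
    congr 1
    ext ⟨x, y⟩
    simp only [P, mem_product, mem_filter]
    constructor
    · rintro ⟨⟨hx, hxr⟩, hy, hyr⟩
      exact ⟨⟨⟨hx, hy⟩, hxr.trans hyr.symm⟩, by omega⟩
    · rintro ⟨⟨⟨hx, hy⟩, hxy⟩, hxr⟩
      exact ⟨⟨hx, by omega⟩, hy, by omega⟩
  have hnat : ∑ r ∈ Icc 1 (q ^ 2), latticePointsOnSphere r ^ 2 ≤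
      #{p ∈ cube (Fin 3) (2 * q) ×ˢ cube (Fin 3) (2 * q) | p.1 ⬝ᵥ p.2 = 0} := by
    rw [sum_congr rfl hfiber, sum_card_fiberwise_eq_card_filter]
    exact (card_filter_le _ _).trans (card_dotProduct_self_eq_le q)
  calc ∑ r ∈ Icc 1 (q ^ 2), (latticePointsOnSphere r : ℝ) ^ 2
      = ((∑ r ∈ Icc 1 (q ^ 2), latticePointsOnSphere r ^ 2 : ℕ) : ℝ) := by push_cast; rfl
    _ ≤ #{p ∈ cube (Fin 3) (2 * q) ×ˢ cube (Fin 3) (2 * q) | p.1 ⬝ᵥ p.2 = 0} := by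
        exact_mod_cast hnat
    _ ≤ 370 * ((2 * q : ℕ) : ℝ) ^ 4 := card_orthogonal_pairs_le (by omega)
    _ = 5920 * q ^ 4 := by push_cast; ring

lemma card_rich_radii_ge {q : ℕ} (hq : 2 ≤ q) :
    (q : ℝ) ^ 2 / 94720 ≤ #{r ∈ Icc 1 (q ^ 2) | (q : ℝ) / 2 ≤ latticePointsOnSphere r} := by
  have hq2 : (2 : ℝ) ≤ q := by exact_mod_cast hq
  have hmass : (q : ℝ) ^ 3 / 4 ≤
      ∑ r ∈ Icc 1 (q ^ 2), (latticePointsOnSphere r : ℝ) - q / 2 * #(Icc 1 (q ^ 2)) := by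
    have := cube_sub_one_le_sum_latticePointsOnSphere q
    rw [Nat.card_Icc, Nat.add_sub_cancel, Nat.cast_pow]
    nlinarith
  have hCS := sq_sum_sub_le_card_filter_mul_sum_sq (Icc 1 (q ^ 2))
    (fun r => (latticePointsOnSphere r : ℝ)) (by positivity)
    ((by positivity : (0 : ℝ) ≤ _).trans hmass)
  have hsq : ((q : ℝ) ^ 3 / 4) ^ 2 ≤
      #{r ∈ Icc 1 (q ^ 2) | (q : ℝ) / 2 ≤ latticePointsOnSphere r} * (5920 * q ^ 4) :=
    calc ((q : ℝ) ^ 3 / 4) ^ 2 ≤ _ := by gcongr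
      _ ≤ _ := hCS
      _ ≤ _ := by gcongr; exact sum_sq_latticePointsOnSphere_le (by omega)
  rw [div_le_iff₀ (by norm_num)]
  refine le_of_mul_le_mul_right ?_ (by positivity : (0 : ℝ) < q ^ 4)
  linarith

end LatticePoints

open LatticePoints in
/-- For every `ε > 0` there is `c > 0` such that for every integer `q > 1`, the number
of integers `1 ≤ r ≤ q²` with `M_r ≥ q/2` is at least `c · q^(2-ε)`. -/
theorem many_rich_radii :
    ∀ ε : ℝ, 0 < ε → ∃ c : ℝ, 0 < c ∧ ∀ q : ℕ, 1 < q →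
      c * (q : ℝ) ^ ((2 : ℝ) - ε) ≤
        (Set.ncard {r : ℕ | 1 ≤ r ∧ r ≤ q ^ 2 ∧
          (q : ℝ) / 2 ≤ (latticePointsOnSphere r : ℝ)} : ℝ) := by
  intro ε _
  refine ⟨1 / 94720, by norm_num, fun q hq => ?_⟩
  have hset : {r : ℕ | 1 ≤ r ∧ r ≤ q ^ 2 ∧ (q : ℝ) / 2 ≤ (latticePointsOnSphere r : ℝ)} =
      ↑{r ∈ Icc 1 (q ^ 2) | (q : ℝ) / 2 ≤ (latticePointsOnSphere r : ℝ)} := by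
    ext r
    simp [and_assoc]
  have hpow : (q : ℝ) ^ (2 - ε) ≤ q ^ 2 := by
    rw [← Real.rpow_two]
    exact Real.rpow_le_rpow_of_exponent_le (by exact_mod_cast hq.le) (by linarith)
  rw [hset, Set.ncard_coe_finset]
  calc 1 / 94720 * (q : ℝ) ^ (2 - ε) ≤ q ^ 2 / 94720 := by linarith
    _ ≤ _ := card_rich_radii_ge hq
end

section
/- For every ε > 0 and every κ > 0, the following holds for every integer q > 1: if A is a set of integers contained in {1, 2, …, q²} with #A ≥ κ · q^{2−ε}, then Σ_{(r₁,r₂,r₃) ∈ A³} 1/gcd(r₁,r₂) ≥ (κ⁶/4) · q^{6−6ε}. -/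
/-!
With `N = #A` and `n = q²`, the triple sum is `N` times the sum of `1 / gcd` over pairs, so since
`N ≤ n` it suffices to bound the pair sum below by `N⁴ / (4 n²)`. A pair whose gcd exceeds `t` has
both entries divisible by some `d > t`, so there are at most `∑_{d > t} (n / d)² ≤ n² / (t - 1)`
such pairs. Summing `1 / gcd` layer by layer between a few thresholds proportional to `n² / N²`
(a discrete layer-cake bound) then gives the constant `1/4`.
-/

open Finset

section LayerCake

variable {ι : Type*} {s : Finset ι} {f : ι → ℝ} {t t' : ℝ}

lemma card_le_mul_sum_inv (h : ∀ p ∈ s, 0 < f p ∧ f p ≤ t) :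
    (#s : ℝ) ≤ t * ∑ p ∈ s, (f p)⁻¹ := by
  rw [card_eq_sum_ones, Nat.cast_sum, mul_sum]
  refine sum_le_sum fun p hp => ?_
  obtain ⟨hpos, hle⟩ := h p hp
  rw [Nat.cast_one, ← div_eq_mul_inv, one_le_div hpos]
  exact hle

lemma card_filter_le_sub_le_mul_sum_inv_sub [DecidableEq ι] (ht : 0 ≤ t) (htt' : t ≤ t') :
    (#(s.filter (f · ≤ t')) : ℝ) - #(s.filter (f · ≤ t)) ≤
      t' * (∑ p ∈ s.filter (f · ≤ t'), (f p)⁻¹ - ∑ p ∈ s.filter (f · ≤ t), (f p)⁻¹) := by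
  have hsub : s.filter (f · ≤ t) ⊆ s.filter (f · ≤ t') := fun p hp => by
    simp only [mem_filter] at hp ⊢
    exact ⟨hp.1, hp.2.trans htt'⟩
  rw [← Nat.cast_sub (card_le_card hsub), ← card_sdiff_of_subset hsub, ← sum_sdiff_eq_sub hsub]
  refine card_le_mul_sum_inv fun p hp => ?_
  simp only [mem_sdiff, mem_filter, not_and, not_le] at hp
  exact ⟨ht.trans_lt (hp.2 hp.1.1), hp.1.2⟩

end LayerCake

lemma card_filter_lt_gcd_le {n k : ℕ} {A : Finset ℕ} (hA : A ⊆ Icc 1 n) (hk : k ≠ 0) :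
    (#((A ×ˢ A).filter fun p => k < p.1.gcd p.2) : ℝ) ≤ n ^ 2 / k := by
  set M : ℕ → Finset ℕ := fun d => (Ioc 0 n).filter (d ∣ ·)
  have hcover : (A ×ˢ A).filter (fun p => k < p.1.gcd p.2) ⊆
      (Ioc k n).biUnion fun d => M d ×ˢ M d := by
    intro p hp
    simp only [mem_filter, mem_product] at hp
    obtain ⟨⟨h1, h2⟩, hlt⟩ := hp
    have h1' := mem_Icc.1 (hA h1)
    have h2' := mem_Icc.1 (hA h2)
    simp only [M, mem_biUnion, mem_product, mem_filter, mem_Ioc]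
    exact ⟨_, ⟨hlt, (Nat.gcd_le_left _ h1'.1).trans h1'.2⟩,
      ⟨h1', Nat.gcd_dvd_left _ _⟩, ⟨h2', Nat.gcd_dvd_right _ _⟩⟩
  rcases lt_or_ge n k with hnk | hkn
  · rw [Ioc_eq_empty_of_le hnk.le, biUnion_empty, subset_empty] at hcover
    rw [hcover, card_empty, Nat.cast_zero]
    positivity
  calc (#((A ×ˢ A).filter fun p => k < p.1.gcd p.2) : ℝ)
      ≤ ∑ d ∈ Ioc k n, ((n / d : ℕ) : ℝ) ^ 2 := by
        have := (card_le_card hcover).trans card_biUnion_le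
        simp only [M, card_product, Nat.Ioc_filter_dvd_card_eq_div, ← sq] at this
        exact_mod_cast this
    _ ≤ ∑ d ∈ Ioc k n, (n : ℝ) ^ 2 * ((d : ℝ) ^ 2)⁻¹ := by
        refine sum_le_sum fun d _ => ?_
        rw [← div_eq_mul_inv, ← div_pow]
        gcongr
        exact Nat.cast_div_le
    _ ≤ n ^ 2 * ((k : ℝ)⁻¹ - (n : ℝ)⁻¹) := by
        rw [← mul_sum]
        exact mul_le_mul_of_nonneg_left (sum_Ioc_inv_sq_le_sub hk hkn) (by positivity)
    _ ≤ n ^ 2 / k := by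
        rw [div_eq_mul_inv]
        gcongr
        exact sub_le_self _ (by positivity)

lemma sq_card_sub_le_card_filter_gcd_le {n : ℕ} {A : Finset ℕ} (hA : A ⊆ Icc 1 n) {t : ℝ}
    (ht : 1 < t) :
    (#A : ℝ) ^ 2 - n ^ 2 / (t - 1) ≤ #((A ×ˢ A).filter fun p => (p.1.gcd p.2 : ℝ) ≤ t) := by
  have hk : ⌊t⌋₊ ≠ 0 := (Nat.floor_pos.2 ht.le).ne'
  have hneg : (A ×ˢ A).filter (fun p => ¬ (p.1.gcd p.2 : ℝ) ≤ t) =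
      (A ×ˢ A).filter (fun p => ⌊t⌋₊ < p.1.gcd p.2) :=
    filter_congr fun p _ => by rw [not_le, Nat.floor_lt (by linarith)]
  have hsplit := card_filter_add_card_filter_not (s := A ×ˢ A) fun p => (p.1.gcd p.2 : ℝ) ≤ t
  rw [hneg, card_product] at hsplit
  have hsplitR : (#((A ×ˢ A).filter fun p => (p.1.gcd p.2 : ℝ) ≤ t) : ℝ) +
      #((A ×ˢ A).filter fun p => ⌊t⌋₊ < p.1.gcd p.2) = (#A : ℝ) ^ 2 := by
    rw [sq]; exact_mod_cast hsplit
  have hfloor : n ^ 2 / (⌊t⌋₊ : ℝ) ≤ n ^ 2 / (t - 1) :=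
    div_le_div_of_nonneg_left (by positivity) (by linarith) (by linarith [Nat.lt_floor_add_one t])
  linarith [card_filter_lt_gcd_le hA hk]

theorem card_pow_four_div_le_sum_inv_gcd {n : ℕ} {A : Finset ℕ} (hA : A ⊆ Icc 1 n) :
    (#A : ℝ) ^ 4 / (4 * n ^ 2) ≤ ∑ p ∈ A ×ˢ A, (p.1.gcd p.2 : ℝ)⁻¹ := by
  rcases A.eq_empty_or_nonempty with rfl | hne
  · simp
  have hcount := fun t (ht : 1 < t) => sq_card_sub_le_card_filter_gcd_le hA ht
  have hN : (0 : ℝ) < #A := by exact_mod_cast hne.card_pos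
  have hNn : (#A : ℝ) ≤ n := by simpa using card_le_card hA
  generalize (#A : ℝ) = N at hcount hN hNn ⊢
  obtain ⟨x, hn⟩ : ∃ x : ℝ, (n : ℝ) ^ 2 = x * N ^ 2 := ⟨n ^ 2 / N ^ 2, by field_simp⟩
  have hx : 1 ≤ x := le_of_mul_le_mul_right (by rw [one_mul, ← hn]; gcongr) (pow_pos hN 2)
  set G : ℝ → ℝ := fun t => #((A ×ˢ A).filter fun p => (p.1.gcd p.2 : ℝ) ≤ t)
  set F : ℝ → ℝ := fun t => ∑ p ∈ (A ×ˢ A).filter (fun p => (p.1.gcd p.2 : ℝ) ≤ t),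
    (p.1.gcd p.2 : ℝ)⁻¹
  have hG : ∀ c : ℝ, 2 < c → N ^ 2 * (1 - (c - 1)⁻¹) ≤ G (c * x) := fun c hc => by
    have hc1 : 0 < c - 1 := by linarith
    have : (n : ℝ) ^ 2 / (c * x - 1) ≤ N ^ 2 * (c - 1)⁻¹ := by
      rw [div_le_iff₀ (by nlinarith), hn]
      calc x * N ^ 2 = N ^ 2 * (c - 1)⁻¹ * ((c - 1) * x) := by field_simp
        _ ≤ _ := by gcongr; linarith
    linarith [hcount (c * x) (by nlinarith)]
  have hstep : ∀ t t' : ℝ, 0 ≤ t → t ≤ t' → G t' - G t ≤ t' * (F t' - F t) :=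
    fun _ _ => card_filter_le_sub_le_mul_sum_inv_sub
  have hfirst : G (5 / 2 * x) ≤ 5 / 2 * x * F (5 / 2 * x) := card_le_mul_sum_inv fun p hp => by
    simp only [mem_filter, mem_product] at hp
    exact ⟨by exact_mod_cast Nat.gcd_pos_of_pos_left _ (mem_Icc.1 (hA hp.1.1)).1, hp.2⟩
  have hlast : x * F (15 / 2 * x) ≤ x * ∑ p ∈ A ×ˢ A, (p.1.gcd p.2 : ℝ)⁻¹ := by
    gcongr
    exact sum_le_sum_of_subset_of_nonneg (filter_subset _ _) fun _ _ _ => by positivity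
  -- Thresholds `c * x` for `c = 5/2, 3, 4, 15/2`: the layer weights add up to `0.2545… ≥ 1/4`.
  have key : N ^ 2 / 4 ≤ x * ∑ p ∈ A ×ˢ A, (p.1.gcd p.2 : ℝ)⁻¹ := by
    have h₁ := hG (5 / 2) (by norm_num)
    have h₂ := hG 3 (by norm_num)
    have h₃ := hG 4 (by norm_num)
    have h₄ := hG (15 / 2) (by norm_num)
    have s₂ := hstep (5 / 2 * x) (3 * x) (by positivity) (by linarith)
    have s₃ := hstep (3 * x) (4 * x) (by positivity) (by linarith)
    have s₄ := hstep (4 * x) (15 / 2 * x) (by positivity) (by linarith)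
    norm_num at h₁ h₂ h₃ h₄
    linarith [sq_nonneg N]
  rw [hn, div_le_iff₀ (by positivity)]
  nlinarith

/-- For every `ε > 0` and `κ > 0` and every integer `q > 1`: if `A ⊆ {1,…,q²}` with
`#A ≥ κ·q^(2-ε)`, then `Σ_{(r₁,r₂,r₃) ∈ A³} 1/gcd(r₁,r₂) ≥ (κ⁶/4)·q^(6-6ε)`. -/
theorem sum_inv_gcd_lower :
    ∀ ε : ℝ, 0 < ε → ∀ κ : ℝ, 0 < κ → ∀ q : ℕ, 1 < q →
      ∀ A : Finset ℕ, A ⊆ Finset.Icc 1 (q ^ 2) →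
        κ * (q : ℝ) ^ ((2 : ℝ) - ε) ≤ (A.card : ℝ) →
        κ ^ 6 / 4 * (q : ℝ) ^ ((6 : ℝ) - 6 * ε) ≤
          ∑ r₁ ∈ A, ∑ r₂ ∈ A, ∑ r₃ ∈ A, 1 / (Nat.gcd r₁ r₂ : ℝ) := by
  intro ε _ κ hκ q hq A hA hcard
  have hq0 : (0 : ℝ) < q := by positivity
  have hpairs := card_pow_four_div_le_sum_inv_gcd hA
  push_cast at hpairs
  have hNq : (#A : ℝ) ≤ q ^ 2 := by exact_mod_cast (card_le_card hA).trans (by simp)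
  have htriple : ∑ r₁ ∈ A, ∑ r₂ ∈ A, ∑ r₃ ∈ A, 1 / (Nat.gcd r₁ r₂ : ℝ) =
      #A * ∑ p ∈ A ×ˢ A, (p.1.gcd p.2 : ℝ)⁻¹ := by
    simp only [sum_const, nsmul_eq_mul, one_div, mul_sum, sum_product]
  have hpow : κ ^ 6 * (q : ℝ) ^ ((6 : ℝ) - 6 * ε) * q ^ 6 ≤ (#A : ℝ) ^ 6 := by
    calc κ ^ 6 * (q : ℝ) ^ ((6 : ℝ) - 6 * ε) * q ^ 6 = (κ * (q : ℝ) ^ ((2 : ℝ) - ε)) ^ 6 := by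
          rw [mul_pow, ← Real.rpow_mul_natCast hq0.le, mul_assoc, ← Real.rpow_add_natCast hq0.ne']
          congr 2
          push_cast
          ring
      _ ≤ (#A : ℝ) ^ 6 := by gcongr
  rw [htriple]
  calc κ ^ 6 / 4 * (q : ℝ) ^ ((6 : ℝ) - 6 * ε) ≤ (#A : ℝ) ^ 6 / (4 * q ^ 6) := by
        rw [le_div_iff₀ (by positivity)]
        linarith
    _ ≤ #A * ((#A : ℝ) ^ 4 / (4 * (q ^ 2) ^ 2)) := by
        rw [div_le_iff₀ (by positivity)]
        field_simp
        nlinarith [mul_le_mul_of_nonneg_left hNq (by positivity : (0 : ℝ) ≤ (#A : ℝ) ^ 5)]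
    _ ≤ _ := by gcongr
end
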